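/- arXiv:math/0504567 — 7 statements merged into one kernel-verified Lean document; each statement's English description precedes it below -/
import Mathlib

section
/- Let Ω ⊆ ℝⁿ be open and star-shaped with respect to 0 ∈ Ω. Define ∂₂Ω := {x ∈ ∂Ω : ∃ε > 0, tx ∈ ∂Ω for all t ∈ (1-ε, 1+ε)} and ∂₁Ω := ∂Ω \ ∂₂Ω. If there exists a convex function u : Ω → ℝ such that for every x ∈ ∂₁Ω and every δ > 0 the essential supremum of |∇u| over B_δ(x) ∩ Ω is infinite, then Ω is convex. -/
/-!
If `Ω` is not convex, some point `m` of a segment between `y₁, y₂ ∈ Ω` lies outside `Ω`, and the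
first point `x = t • m` where the ray from `0` leaves `Ω` lies in `∂₁Ω`, since `s • x ∈ Ω` for
`s < 1`. By star-shapedness `x` is a convex combination of `t • y₁, t • y₂ ∈ Ω`, so it is an
interior point of the convex hull of `Ω`. But the gradient of a convex function stays bounded
near such points: for `y ∈ Ω` and `p` in the convex hull, the subgradient inequality gives
`∇u(y)·(p - y) ≤ max_F u - u(y)` for a finite `F ⊆ Ω` with `p ∈ conv F`, and `u` is bounded
below on bounded parts of `Ω` (it is continuous near some `a ∈ Ω`, and `a` lies between any
point and a reflected point near `a`). Testing finitely many `p = x + v` around `x` bounds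
`‖∇u(y)‖`, contradicting the blow-up.
-/

open Metric Set Filter Topology

section Ray

variable {E : Type*} [AddCommGroup E] [Module ℝ E] [TopologicalSpace E] [ContinuousSMul ℝ E]
  {Ω : Set E}

theorem exists_smul_notMem_and_forall_smul_mem (hΩ : IsOpen Ω) (h0 : (0 : E) ∈ Ω) {m : E}
    (hm : m ∉ Ω) : ∃ t ∈ Icc (0:ℝ) 1, t • m ∉ Ω ∧ ∀ s ∈ Ico (0:ℝ) 1, s • t • m ∈ Ω := by
  set T := Icc (0:ℝ) 1 ∩ (fun t : ℝ => t • m) ⁻¹' Ωᶜ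
  have hT : IsClosed T :=
    isClosed_Icc.inter (hΩ.isClosed_compl.preimage (continuous_id.smul continuous_const))
  have hT1 : (1:ℝ) ∈ T := ⟨right_mem_Icc.2 zero_le_one, by simpa using hm⟩
  obtain ⟨ht, htm⟩ : sInf T ∈ T := hT.csInf_mem ⟨1, hT1⟩ ⟨0, fun t ht => ht.1.1⟩
  refine ⟨sInf T, ht, htm, fun s hs => ?_⟩
  have ht0 : 0 < sInf T := ht.1.lt_of_ne fun h => htm (by simpa [← h] using h0)
  have hst : s * sInf T < sInf T := mul_lt_of_lt_one_left ht0 hs.2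
  have hsT : s * sInf T ∉ T := fun h => hst.not_ge (csInf_le ⟨0, fun t ht => ht.1.1⟩ h)
  rw [smul_smul]
  by_contra hsm
  exact hsT ⟨⟨mul_nonneg hs.1 ht0.le, hst.le.trans ht.2⟩, hsm⟩

theorem mem_frontier_diff_of_forall_smul_mem (hΩ : IsOpen Ω) {x : E} (hx : x ∉ Ω)
    (hray : ∀ s ∈ Ico (0:ℝ) 1, s • x ∈ Ω) :
    x ∈ frontier Ω \
      {x ∈ frontier Ω | ∃ ε > (0:ℝ), ∀ t ∈ Ioo (1 - ε) (1 + ε), t • x ∈ frontier Ω} := by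
  have hcl : x ∈ closure Ω := by
    have hlim : Tendsto (fun s : ℝ => s • x) (𝓝[<] 1) (𝓝 x) := by
      simpa using (tendsto_id.smul_const x).mono_left (nhdsWithin_le_nhds (a := (1:ℝ)))
    exact mem_closure_of_tendsto hlim
      (eventually_of_mem (Ico_mem_nhdsLT zero_lt_one) hray)
  refine ⟨⟨hcl, by rwa [hΩ.interior_eq]⟩, fun ⟨_, ε, hε, hfr⟩ => ?_⟩
  set s := max (1 - ε / 2) 0
  have hs : s ∈ Ico (0:ℝ) 1 := ⟨le_max_right _ _, max_lt (by linarith) zero_lt_one⟩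
  have hsε : s ∈ Ioo (1 - ε) (1 + ε) :=
    ⟨lt_max_of_lt_left (by linarith), hs.2.trans (by linarith)⟩
  exact (hfr s hsε).2 (by rw [hΩ.interior_eq]; exact hray s hs)

end Ray

variable {E : Type*} [NormedAddCommGroup E] [NormedSpace ℝ E]

theorem exists_finset_norm_lt_and_opNorm_le [FiniteDimensional ℝ E] {r : ℝ} (hr : 0 < r) :
    ∃ V : Finset E, (∀ v ∈ V, ‖v‖ < r) ∧ ∃ C > 0, ∀ (G : E →L[ℝ] ℝ) (M : ℝ), 0 ≤ M →
      (∀ v ∈ V, G v ≤ M) → ‖G‖ ≤ C * M := by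
  classical
  set b := Module.finBasis ℝ E
  obtain ⟨C, hC, hbC⟩ := b.exists_opNorm_le (F := ℝ)
  set K := ∑ i, ‖b i‖
  set ρ := r / (K + 1)
  have hK : 0 ≤ K := Finset.sum_nonneg fun i _ => norm_nonneg _
  have hρ : 0 < ρ := by positivity
  refine ⟨Finset.univ.image (fun i => ρ • b i) ∪ Finset.univ.image (fun i => -(ρ • b i)),
    ?_, C / ρ, by positivity, fun G M hM hGM => ?_⟩
  · have hsmall : ∀ i, ‖ρ • b i‖ < r := fun i => calc
      ‖ρ • b i‖ = ρ * ‖b i‖ := by rw [norm_smul, Real.norm_of_nonneg hρ.le]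
      _ ≤ ρ * K := by
        gcongr
        exact Finset.single_le_sum (f := fun j => ‖b j‖) (fun j _ => norm_nonneg _)
          (Finset.mem_univ i)
      _ < ρ * (K + 1) := by gcongr; linarith
      _ = r := div_mul_cancel₀ r (by positivity)
    simp only [Finset.mem_union, Finset.mem_image, Finset.mem_univ, true_and]
    rintro v (⟨i, rfl⟩ | ⟨i, rfl⟩)
    · exact hsmall i
    · rw [norm_neg]; exact hsmall i
  · have hcoord : ∀ i, ‖G (b i)‖ ≤ M / ρ := fun i => by
      have hplus := hGM (ρ • b i) (by simp)
      have hminus := hGM (-(ρ • b i)) (by simp)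
      rw [map_smul, smul_eq_mul] at hplus
      rw [map_neg, map_smul, smul_eq_mul] at hminus
      calc ‖G (b i)‖ = |ρ * G (b i)| / ρ := by
            rw [abs_mul, abs_of_pos hρ, mul_div_cancel_left₀ _ hρ.ne', Real.norm_eq_abs]
        _ ≤ M / ρ := by gcongr; exact abs_le.2 ⟨by linarith, hplus⟩
    calc ‖G‖ ≤ C * (M / ρ) := hbC (by positivity) hcoord
      _ = C / ρ * M := by ring

def SegmentwiseConvexOn (Ω : Set E) (u : E → ℝ) : Prop :=
  ∀ x ∈ Ω, ∀ y ∈ Ω, ∀ τ : ℝ, τ ∈ Ioo (0:ℝ) 1 → τ • x + (1 - τ) • y ∈ Ω →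
    u (τ • x + (1 - τ) • y) ≤ τ * u x + (1 - τ) * u y

namespace SegmentwiseConvexOn

variable {Ω : Set E} {u : E → ℝ}

theorem convexOn (hu : SegmentwiseConvexOn Ω u) {s : Set E} (hs : Convex ℝ s) (hsΩ : s ⊆ Ω) :
    ConvexOn ℝ s u := by
  refine convexOn_iff_forall_pos.2 ⟨hs, fun p hp q hq c d hc hd hcd => ?_⟩
  obtain rfl : d = 1 - c := by linarith
  exact hu p (hsΩ hp) q (hsΩ hq) c ⟨hc, by linarith⟩ (hsΩ (hs hp hq hc.le hd.le hcd))

theorem fderiv_sub_le (hu : SegmentwiseConvexOn Ω u) (hΩ : IsOpen Ω) {y z : E} (hy : y ∈ Ω)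
    (hz : z ∈ Ω) (hd : DifferentiableAt ℝ u y) : fderiv ℝ u y (z - y) ≤ u z - u y := by
  set f : ℝ → ℝ := fun s => u (y + s • (z - y))
  have hf : HasDerivAt f (fderiv ℝ u y (z - y)) 0 := by
    have hline : HasDerivAt (fun s : ℝ => y + s • (z - y)) (z - y) 0 := by
      simpa using ((hasDerivAt_id (0:ℝ)).smul_const (z - y)).const_add y
    have hu' : HasFDerivAt u (fderiv ℝ u y) (y + (0:ℝ) • (z - y)) := by
      simpa using hd.hasFDerivAt
    exact hu'.comp_hasDerivAt 0 hline
  have hmem : ∀ᶠ s in 𝓝[>] (0:ℝ), y + s • (z - y) ∈ Ω :=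
    nhdsWithin_le_nhds <| (Continuous.tendsto (by fun_prop) 0).eventually
      (by simpa using hΩ.mem_nhds hy)
  refine le_of_tendsto hf.tendsto_slope_zero_right ?_
  filter_upwards [hmem, Ioo_mem_nhdsGT zero_lt_one] with s hs hs01
  have hseg := hu z hz y hy s hs01 (by convert hs using 1; module)
  rw [show s • z + (1 - s) • y = y + s • (z - y) by module] at hseg
  simp only [f, zero_add, zero_smul, add_zero, smul_eq_mul]
  rw [inv_mul_le_iff₀ hs01.1]
  linarith

theorem eventually_fderiv_sub_le (hu : SegmentwiseConvexOn Ω u) (hΩ : IsOpen Ω) {p : E}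
    (hp : p ∈ convexHull ℝ Ω) :
    ∀ᶠ M in atTop, ∀ y ∈ Ω, DifferentiableAt ℝ u y → fderiv ℝ u y (p - y) ≤ M - u y := by
  rw [convexHull_eq_union_convexHull_finite_subsets, mem_iUnion₂] at hp
  obtain ⟨F, hFΩ, hpF⟩ := hp
  obtain ⟨M₀, hM₀⟩ := (F.finite_toSet.image u).bddAbove
  filter_upwards [eventually_ge_atTop M₀] with M hM y hy hd
  set G := fderiv ℝ u y
  have hhalf : Convex ℝ {q | G q ≤ M - u y + G y} := convex_halfSpace_le G.isLinear _
  have hFhalf : (F : Set E) ⊆ {q | G q ≤ M - u y + G y} := fun z hz => by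
    have := hu.fderiv_sub_le hΩ hy (hFΩ hz) hd
    have := hM₀ (mem_image_of_mem u hz)
    rw [map_sub] at *
    simp only [mem_ofPred_eq]
    linarith
  have := convexHull_min hFhalf hhalf hpF
  simp only [mem_ofPred_eq] at this
  rw [map_sub]
  linarith

theorem bddBelow_image_inter [FiniteDimensional ℝ E] (hu : SegmentwiseConvexOn Ω u)
    (hΩ : IsOpen Ω) {a : E} (ha : a ∈ Ω) {s : Set E} (hs : Bornology.IsBounded s) :
    BddBelow (u '' (Ω ∩ s)) := by
  obtain ⟨ρ, hρ, hballΩ⟩ := Metric.isOpen_iff.1 hΩ a ha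
  obtain ⟨R, hR, hsR⟩ := hs.subset_closedBall_lt 0 a
  have hcont : ContinuousOn u (ball a ρ) :=
    (hu.convexOn (convex_ball a ρ) hballΩ).continuousOn isOpen_ball
  obtain ⟨M, hM⟩ := (isCompact_closedBall a (ρ / 2)).bddAbove_image
    (hcont.mono (closedBall_subset_ball (by linarith)))
  obtain ⟨c, hc, hcR⟩ : ∃ c > 0, c * R = ρ / 2 := ⟨ρ / (2 * R), by positivity, by field_simp⟩
  obtain ⟨τ, hτ, hτc, hτ1⟩ : ∃ τ ∈ Ioo (0:ℝ) 1, τ = (1 - τ) * c ∧ (1 - τ) * (1 + c) = 1 :=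
    ⟨c / (1 + c), ⟨by positivity, (div_lt_one (by positivity)).2 (by linarith)⟩,
      by field_simp; ring, by field_simp; ring⟩
  refine ⟨(u a - (1 - τ) * M) / τ, ?_⟩
  rintro _ ⟨y, ⟨hyΩ, hys⟩, rfl⟩
  -- `a` lies on the segment from `y` to the reflected point `z`, which stays near `a`.
  set z := a + c • (a - y)
  have hz : z ∈ closedBall a (ρ / 2) := by
    rw [mem_closedBall, dist_eq_norm, show z - a = c • (a - y) by simp [z], norm_smul,
      Real.norm_of_nonneg hc.le, ← dist_eq_norm, dist_comm, ← hcR]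
    gcongr
    exact mem_closedBall.1 (hsR hys)
  have hcomb : τ • y + (1 - τ) • z = a := by
    rw [show τ • y + (1 - τ) • z = (τ - (1 - τ) * c) • y + ((1 - τ) * (1 + c)) • a by module,
      hτ1, ← hτc, sub_self, zero_smul, one_smul, zero_add]
  have hseg := hu y hyΩ z (hballΩ (closedBall_subset_ball (by linarith) hz)) τ hτ
    (hcomb ▸ ha)
  rw [hcomb] at hseg
  have huz : (1 - τ) * u z ≤ (1 - τ) * M := by
    gcongr
    · linarith [hτ.2]
    · exact hM (mem_image_of_mem u hz)
  rw [div_le_iff₀ hτ.1]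
  linarith

theorem exists_forall_norm_fderiv_le [FiniteDimensional ℝ E] (hu : SegmentwiseConvexOn Ω u)
    (hΩ : IsOpen Ω) {x : E} (hx : x ∈ interior (convexHull ℝ Ω)) :
    ∃ δ > 0, ∃ C, ∀ y ∈ ball x δ ∩ Ω, DifferentiableAt ℝ u y → ‖fderiv ℝ u y‖ ≤ C := by
  obtain ⟨a, ha⟩ : Ω.Nonempty := convexHull_nonempty_iff.1 ⟨x, interior_subset hx⟩
  obtain ⟨r, hr, hballx⟩ := Metric.isOpen_iff.1 isOpen_interior x hx
  obtain ⟨V, hVr, K, hK, hnorm⟩ := exists_finset_norm_lt_and_opNorm_le (E := E) hr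
  obtain ⟨m, hm⟩ := hu.bddBelow_image_inter hΩ ha (isBounded_ball (x := x) (r := 1))
  have hprobe : ∀ v ∈ V, x + v ∈ convexHull ℝ Ω := fun v hv =>
    interior_subset (hballx (by simpa using hVr v hv))
  obtain ⟨M, hM, hmM⟩ := (((Finset.eventually_all V).2 fun v hv =>
    hu.eventually_fderiv_sub_le hΩ (hprobe v hv)).and (eventually_ge_atTop m)).exists
  set δ := min 1 (1 / (2 * K))
  refine ⟨δ, by positivity, 2 * K * (M - m), fun y ⟨hyx, hyΩ⟩ hd => ?_⟩
  set G := fderiv ℝ u y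
  have hyx' : ‖x - y‖ ≤ δ := by rw [← dist_eq_norm, dist_comm]; exact (mem_ball.1 hyx).le
  have hmy : m ≤ u y := hm (mem_image_of_mem u ⟨hyΩ, ball_subset_ball (min_le_left _ _) hyx⟩)
  have hGv : ∀ v ∈ V, G v ≤ M - m + ‖G‖ * δ := fun v hv => by
    have h1 := hM v hv y hyΩ hd
    have h2 : -(‖G‖ * δ) ≤ G (x - y) :=
      (neg_le_neg ((G.le_opNorm _).trans (by gcongr))).trans (neg_abs_le _)
    rw [show x + v - y = v + (x - y) by abel, map_add] at h1
    linarith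
  have hGnorm := hnorm G _ (by positivity) hGv
  have hKδ : K * δ ≤ 1 / 2 := by
    calc K * δ ≤ K * (1 / (2 * K)) := by gcongr; exact min_le_right _ _
      _ = 1 / 2 := by field_simp
  nlinarith [norm_nonneg G]

end SegmentwiseConvexOn

/-- A star-shaped open set admitting a convex function whose gradient blows up
near every point of `∂₁Ω` is convex. -/
theorem stmt_1 {n : ℕ} (Ω : Set (EuclideanSpace ℝ (Fin n)))
    (hΩopen : IsOpen Ω) (h0 : (0 : EuclideanSpace ℝ (Fin n)) ∈ Ω)
    (hstar : ∀ x ∈ Ω, ∀ t : ℝ, t ∈ Icc (0:ℝ) 1 → t • x ∈ Ω)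
    (u : EuclideanSpace ℝ (Fin n) → ℝ)
    (hconv : ∀ x ∈ Ω, ∀ y ∈ Ω, ∀ τ : ℝ, τ ∈ Ioo (0:ℝ) 1 →
      τ • x + (1 - τ) • y ∈ Ω →
      u (τ • x + (1 - τ) • y) ≤ τ * u x + (1 - τ) * u y)
    (hblow : ∀ x ∈ frontier Ω \
        {x ∈ frontier Ω | ∃ ε > (0:ℝ), ∀ t ∈ Ioo (1 - ε) (1 + ε), t • x ∈ frontier Ω},
      ∀ δ > (0:ℝ), ∀ C : ℝ,
      ∃ y ∈ ball x δ ∩ Ω, DifferentiableAt ℝ u y ∧ C < ‖fderiv ℝ u y‖) :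
    Convex ℝ Ω := by
  intro y₁ hy₁ y₂ hy₂ a b ha hb hab
  by_contra hm
  obtain ⟨t, ht, hxΩ, hray⟩ := exists_smul_notMem_and_forall_smul_mem hΩopen h0 hm
  have hΩhull : Ω ⊆ interior (convexHull ℝ Ω) :=
    hΩopen.subset_interior_iff.2 (subset_convexHull ℝ Ω)
  have hx : t • (a • y₁ + b • y₂) ∈ interior (convexHull ℝ Ω) := by
    rw [smul_add, smul_comm t a, smul_comm t b]
    exact (convex_convexHull ℝ Ω).interior (hΩhull (hstar y₁ hy₁ t ht))
      (hΩhull (hstar y₂ hy₂ t ht)) ha hb hab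
  obtain ⟨δ, hδ, C, hC⟩ := SegmentwiseConvexOn.exists_forall_norm_fderiv_le hconv hΩopen hx
  obtain ⟨y, hy, hdy, hCy⟩ :=
    hblow _ (mem_frontier_diff_of_forall_smul_mem hΩopen hxΩ hray) δ hδ C
  exact (hC y hy hdy).not_gt hCy
end

section
/- Let Ω ⊆ ℝⁿ be open and star-shaped with respect to 0. Suppose y₀, y₁ ∈ Ω, τ ∈ (0,1), the point p₀ := τy₀ + (1-τ)y₁ lies in ∂Ω, and μp₀ ∈ Ω for all 0 ≤ μ < 1 (i.e., the entire segment from 0 to p₀, except its endpoint, lies in Ω). Then p₀ ∈ ∂₁Ω, i.e., there is no ε > 0 such that tp₀ ∈ ∂Ω for all t ∈ (1-ε, 1+ε). -/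
open Metric Set

/-- A boundary point of a star-shaped open set whose open radial segment lies in
the set belongs to `∂₁Ω`. -/
theorem stmt_2 {n : ℕ} (Ω : Set (EuclideanSpace ℝ (Fin n)))
    (hΩopen : IsOpen Ω) (h0 : (0 : EuclideanSpace ℝ (Fin n)) ∈ Ω)
    (hstar : ∀ x ∈ Ω, ∀ t : ℝ, t ∈ Icc (0:ℝ) 1 → t • x ∈ Ω)
    (y₀ y₁ : EuclideanSpace ℝ (Fin n)) (hy₀ : y₀ ∈ Ω) (hy₁ : y₁ ∈ Ω)
    (τ : ℝ) (hτ : τ ∈ Ioo (0:ℝ) 1)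
    (p₀ : EuclideanSpace ℝ (Fin n)) (hp₀ : p₀ = τ • y₀ + (1 - τ) • y₁)
    (hfront : p₀ ∈ frontier Ω)
    (hseg : ∀ μ : ℝ, 0 ≤ μ → μ < 1 → μ • p₀ ∈ Ω) :
    ¬ ∃ ε > (0:ℝ), ∀ t ∈ Ioo (1 - ε) (1 + ε), t • p₀ ∈ frontier Ω := by
  rintro ⟨ε, hε, hall⟩
  set t : ℝ := max 0 (1 - ε/2) with ht
  have ht0 : 0 ≤ t := le_max_left _ _
  have ht1 : t < 1 := max_lt one_pos (by linarith)
  have htlo : 1 - ε < t := lt_of_lt_of_le (by linarith) (le_max_right _ _)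
  have hthi : t < 1 + ε := by linarith
  have hmem : t • p₀ ∈ Ω := hseg t ht0 ht1
  have hfr : t • p₀ ∈ frontier Ω := hall t ⟨htlo, hthi⟩
  exact hfr.2 (subset_interior_iff_isOpen.mpr hΩopen hmem)
end

section
/- Let u : Ω → ℝ be convex on Ω ⊆ ℝⁿ open, y₀, y₁ ∈ Ω distinct, τ ∈ (0,1), and ε > 0. Assume: (i) the balls B_{3ε}(y₀), B_{3ε}(y₁), B_{3ε}(τy₀+(1-τ)y₁) are pairwise disjoint (so τ ≥ 6ε/|y₀-y₁| and 1-τ ≥ 6ε/|y₀-y₁|); (ii) |u| ≤ 1 on B_ε(y₀) ∪ B_ε(y₁); (iii) |u| ≤ C₀ on B_ε(τy₀+(1-τ)y₁) ∩ Ω. Then for every p ∈ B_ε(τy₀+(1-τ)y₁) ∩ Ω at which u is differentiable, the directional derivative of u in direction e := (y₁-y₀)/|y₁-y₀| satisfies |⟨∇u(p), e⟩| ≤ (1+C₀)/(6ε). -/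
/-!
Convexity gives the subgradient inequality `Du(p)(z - p) ≤ u z - u p`. For
`z = p + τ (y₁ - y₀) ∈ B_ε(y₁)` and `z = p + (1 - τ) (y₀ - y₁) ∈ B_ε(y₀)` the right-hand side is
at most `1 + C₀`, which bounds `Du(p)(y₁ - y₀)` from above by `(1 + C₀) / τ` and from below by
`-(1 + C₀) / (1 - τ)`. Disjointness of the `3ε`-balls around `y₀`, `y₁` and their convex
combination gives `τ ‖y₁ - y₀‖ ≥ 6ε` and `(1 - τ) ‖y₁ - y₀‖ ≥ 6ε`.
-/

open Metric Set Filter Topology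

theorem HasDerivAt.le_of_eventually_le_add_mul {g : ℝ → ℝ} {d c : ℝ} (hg : HasDerivAt g d 0)
    (h : ∀ᶠ t in 𝓝[>] 0, g t ≤ g 0 + t * c) : d ≤ c := by
  have hslope : Tendsto (slope g 0) (𝓝[>] 0) (𝓝 d) :=
    (hasDerivAt_iff_tendsto_slope.mp hg).mono_left (nhdsGT_le_nhdsNE 0)
  refine le_of_tendsto hslope ?_
  filter_upwards [h, self_mem_nhdsWithin] with t hgt (ht : 0 < t)
  rw [slope_def_field, sub_zero, div_le_iff₀ ht]
  linarith

section ConvexDerivative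

variable {E : Type*} [NormedAddCommGroup E] [NormedSpace ℝ E]

theorem fderiv_sub_le_sub_of_convex {Ω : Set E} {u : E → ℝ}
    (hconv : ∀ x ∈ Ω, ∀ y ∈ Ω, ∀ τ : ℝ, τ ∈ Ioo (0:ℝ) 1 →
      τ • x + (1 - τ) • y ∈ Ω → u (τ • x + (1 - τ) • y) ≤ τ * u x + (1 - τ) * u y)
    {p z : E} (hΩ : Ω ∈ 𝓝 p) (hz : z ∈ Ω) (hdiff : DifferentiableAt ℝ u p) :
    fderiv ℝ u p (z - p) ≤ u z - u p := by
  set line : ℝ → E := fun t => p + t • (z - p)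
  have hline : HasDerivAt line (z - p) 0 := by
    simpa only [one_smul] using ((hasDerivAt_id' (0:ℝ)).smul_const (z - p)).const_add p
  have hline0 : line 0 = p := by simp [line]
  have hderiv : HasDerivAt (u ∘ line) (fderiv ℝ u p (z - p)) 0 :=
    hdiff.hasFDerivAt.comp_hasDerivAt_of_eq 0 hline hline0.symm
  have hlineΩ : ∀ᶠ t in 𝓝 (0:ℝ), line t ∈ Ω :=
    hline.continuousAt.tendsto.eventually (hline0 ▸ hΩ)
  refine hderiv.le_of_eventually_le_add_mul ?_
  filter_upwards [nhdsWithin_le_nhds hlineΩ, nhdsWithin_le_nhds (gt_mem_nhds one_pos),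
    self_mem_nhdsWithin] with t htΩ ht1 (ht0 : 0 < t)
  have hcomb : t • z + (1 - t) • p = line t := by simp only [line]; module
  have := hconv z hz p (mem_of_mem_nhds hΩ) t ⟨ht0, ht1⟩ (hcomb ▸ htΩ)
  rw [hcomb] at this
  simp only [Function.comp, hline0]
  linarith

theorem fderiv_unit_sub_le_of_disjoint_balls {Ω : Set E} (hΩ : IsOpen Ω) {u : E → ℝ}
    (hconv : ∀ x ∈ Ω, ∀ y ∈ Ω, ∀ τ : ℝ, τ ∈ Ioo (0:ℝ) 1 →
      τ • x + (1 - τ) • y ∈ Ω → u (τ • x + (1 - τ) • y) ≤ τ * u x + (1 - τ) * u y)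
    {y₀ y₁ p : E} {τ ε C₀ : ℝ} (hτ : 0 < τ)
    (hdisj : Disjoint (ball y₁ (3 * ε)) (ball (τ • y₀ + (1 - τ) • y₁) (3 * ε)))
    (hball : ball y₁ ε ⊆ Ω) (hbd : ∀ x ∈ ball y₁ ε, |u x| ≤ 1)
    (hp : p ∈ ball (τ • y₀ + (1 - τ) • y₁) ε) (hpΩ : p ∈ Ω) (hup : |u p| ≤ C₀)
    (hdiff : DifferentiableAt ℝ u p) :
    fderiv ℝ u p (‖y₁ - y₀‖⁻¹ • (y₁ - y₀)) ≤ (1 + C₀) / (6 * ε) := by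
  set q := τ • y₀ + (1 - τ) • y₁
  set v := y₁ - y₀
  have hε : 0 < ε := pos_of_mem_ball hp
  have hsep : 6 * ε ≤ τ * ‖v‖ := by
    have hdist : dist y₁ q = τ * ‖v‖ := by
      rw [dist_eq_norm, show y₁ - q = τ • v by simp only [q, v]; module, norm_smul,
        Real.norm_of_nonneg hτ.le]
    have h3ε : 0 < 3 * ε := by positivity
    linarith [(disjoint_ball_ball_iff h3ε h3ε).mp hdisj]
  have hz : p + τ • v ∈ ball y₁ ε := by
    rwa [mem_ball, dist_eq_norm, show p + τ • v - y₁ = p - q by simp only [q, v]; module,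
      ← dist_eq_norm]
  have hsub := fderiv_sub_le_sub_of_convex hconv (hΩ.mem_nhds hpΩ) (hball hz) hdiff
  rw [add_sub_cancel_left, map_smul, smul_eq_mul] at hsub
  have hτD : τ * fderiv ℝ u p v ≤ 1 + C₀ := by
    linarith [(abs_le.mp (hbd _ hz)).2, (abs_le.mp hup).1]
  have hv : 0 < ‖v‖ := pos_of_mul_pos_right (hsep.trans_lt' (by positivity)) hτ.le
  have hC₀ : 0 ≤ C₀ := (abs_nonneg _).trans hup
  rw [map_smul, smul_eq_mul, inv_mul_eq_div, div_le_div_iff₀ hv (by positivity)]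
  nlinarith

end ConvexDerivative

theorem stmt_5_general {n : ℕ} (Ω : Set (EuclideanSpace ℝ (Fin n))) (hΩopen : IsOpen Ω)
    (u : EuclideanSpace ℝ (Fin n) → ℝ)
    (hconv : ∀ x ∈ Ω, ∀ y ∈ Ω, ∀ τ : ℝ, τ ∈ Ioo (0:ℝ) 1 →
      τ • x + (1 - τ) • y ∈ Ω →
      u (τ • x + (1 - τ) • y) ≤ τ * u x + (1 - τ) * u y)
    (y₀ y₁ : EuclideanSpace ℝ (Fin n))
    (τ : ℝ) (hτ : τ ∈ Ioo (0:ℝ) 1) (ε : ℝ) (C₀ : ℝ)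
    (hdisj₀q : Disjoint (ball y₀ (3 * ε)) (ball (τ • y₀ + (1 - τ) • y₁) (3 * ε)))
    (hdisj₁q : Disjoint (ball y₁ (3 * ε)) (ball (τ • y₀ + (1 - τ) • y₁) (3 * ε)))
    (hball₀ : ball y₀ ε ⊆ Ω) (hball₁ : ball y₁ ε ⊆ Ω)
    (hbd : ∀ x ∈ ball y₀ ε ∪ ball y₁ ε, |u x| ≤ 1)
    (hbdq : ∀ x ∈ ball (τ • y₀ + (1 - τ) • y₁) ε ∩ Ω, |u x| ≤ C₀)
    (p : EuclideanSpace ℝ (Fin n)) (hp : p ∈ ball (τ • y₀ + (1 - τ) • y₁) ε ∩ Ω)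
    (hdiff : DifferentiableAt ℝ u p) :
    |fderiv ℝ u p (‖y₁ - y₀‖⁻¹ • (y₁ - y₀))| ≤ (1 + C₀) / (6 * ε) := by
  obtain ⟨hpq, hpΩ⟩ := hp
  have hup := hbdq p ⟨hpq, hpΩ⟩
  have hupper := fderiv_unit_sub_le_of_disjoint_balls hΩopen hconv hτ.1 hdisj₁q hball₁
    (fun x hx ↦ hbd x (.inr hx)) hpq hpΩ hup hdiff
  have hswap : (1 - τ) • y₁ + (1 - (1 - τ)) • y₀ = τ • y₀ + (1 - τ) • y₁ := by module
  have hlower := fderiv_unit_sub_le_of_disjoint_balls (y₀ := y₁) (y₁ := y₀) hΩopen hconv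
    (sub_pos.mpr hτ.2) (by rwa [hswap]) hball₀ (fun x hx ↦ hbd x (.inl hx)) (by rwa [hswap])
    hpΩ hup hdiff
  rw [norm_sub_rev, ← neg_sub y₁ y₀, smul_neg, map_neg] at hlower
  exact abs_le.mpr ⟨neg_le.mp hlower, hupper⟩

/-- Bound on the directional derivative of a convex function in the direction
`(y₁ - y₀)/‖y₁ - y₀‖` near the convex combination `τ • y₀ + (1 - τ) • y₁`. -/
theorem stmt_5 {n : ℕ} (Ω : Set (EuclideanSpace ℝ (Fin n))) (hΩopen : IsOpen Ω)
    (u : EuclideanSpace ℝ (Fin n) → ℝ)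
    (hconv : ∀ x ∈ Ω, ∀ y ∈ Ω, ∀ τ : ℝ, τ ∈ Ioo (0:ℝ) 1 →
      τ • x + (1 - τ) • y ∈ Ω →
      u (τ • x + (1 - τ) • y) ≤ τ * u x + (1 - τ) * u y)
    (y₀ y₁ : EuclideanSpace ℝ (Fin n)) (hne : y₀ ≠ y₁) (hy₀ : y₀ ∈ Ω) (hy₁ : y₁ ∈ Ω)
    (τ : ℝ) (hτ : τ ∈ Ioo (0:ℝ) 1) (ε : ℝ) (hε : 0 < ε) (C₀ : ℝ)
    (hdisj₀₁ : Disjoint (ball y₀ (3 * ε)) (ball y₁ (3 * ε)))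
    (hdisj₀q : Disjoint (ball y₀ (3 * ε)) (ball (τ • y₀ + (1 - τ) • y₁) (3 * ε)))
    (hdisj₁q : Disjoint (ball y₁ (3 * ε)) (ball (τ • y₀ + (1 - τ) • y₁) (3 * ε)))
    (hball₀ : ball y₀ ε ⊆ Ω) (hball₁ : ball y₁ ε ⊆ Ω)
    (hbd : ∀ x ∈ ball y₀ ε ∪ ball y₁ ε, |u x| ≤ 1)
    (hbdq : ∀ x ∈ ball (τ • y₀ + (1 - τ) • y₁) ε ∩ Ω, |u x| ≤ C₀)
    (p : EuclideanSpace ℝ (Fin n)) (hp : p ∈ ball (τ • y₀ + (1 - τ) • y₁) ε ∩ Ω)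
    (hdiff : DifferentiableAt ℝ u p) :
    |fderiv ℝ u p (‖y₁ - y₀‖⁻¹ • (y₁ - y₀))| ≤ (1 + C₀) / (6 * ε) :=
  stmt_5_general Ω hΩopen u hconv y₀ y₁ τ hτ ε C₀ hdisj₀q hdisj₁q hball₀ hball₁ hbd hbdq p hp hdiff
end

section
/- With the same setup as the directional derivative bound (balls B_{3ε} around y₀, y₁, and q := τy₀+(1-τ)y₁ pairwise disjoint, |u| ≤ 1 on B_{2ε}(y₀) ∪ B_{2ε}(y₁), |u| ≤ C₀ on B_ε(q) ∩ Ω), for every unit vector ξ orthogonal to y₁ - y₀ and every p ∈ B_ε(q) ∩ Ω at which u is differentiable, one has ε·⟨∇u(p), ±ξ⟩ ≤ (1 + |y₀-y₁|/(6ε))·(1 + C₀). Consequently |∇u| is bounded on B_ε(q) ∩ Ω by a constant depending only on ε, C₀, and |y₀-y₁|. -/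
open Metric Set

/-!
Convexity makes `∇u(p)·v ≤ u(p + v) - u(p)` whenever `p + v ∈ Ω`. Any `w` with `‖w‖ ≤ ε` splits
as `w = τ v₀ + (1 - τ) v₁` with `v₀ = (1 - τ)(y₀ - y₁) + w` and `v₁ = τ(y₁ - y₀) + w`, and for
`p ∈ B_ε(q)` the points `p + vᵢ = yᵢ + (p - q) + w` lie in `B_{2ε}(yᵢ)`, where `u ≤ 1`. Hence
`∇u(p)·w ≤ 1 - u(p) ≤ 1 + C₀` for every such `w`; applied to `±w` this bounds `‖∇u(p)‖` by
`(1 + C₀)/ε`.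
-/

section

variable {E : Type*} [NormedAddCommGroup E] [NormedSpace ℝ E] {Ω : Set E} {u : E → ℝ}

theorem fderiv_apply_le_sub (hΩ : IsOpen Ω)
    (hconv : ∀ x ∈ Ω, ∀ y ∈ Ω, ∀ τ : ℝ, τ ∈ Ioo (0:ℝ) 1 →
      τ • x + (1 - τ) • y ∈ Ω → u (τ • x + (1 - τ) • y) ≤ τ * u x + (1 - τ) * u y)
    {p v : E} (hp : p ∈ Ω) (hpv : p + v ∈ Ω) (hd : DifferentiableAt ℝ u p) :
    fderiv ℝ u p v ≤ u (p + v) - u p := by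
  have hline : HasDerivAt (fun t : ℝ => u (p + t • v)) (fderiv ℝ u p v) 0 := by
    have hfd : HasFDerivAt u (fderiv ℝ u p) (p + (0:ℝ) • v) := by simpa using hd.hasFDerivAt
    refine hfd.comp_hasDerivAt 0 ?_
    simpa using ((hasDerivAt_id (0:ℝ)).smul_const v).const_add p
  have hslope : Filter.Tendsto (slope (fun t : ℝ => u (p + t • v)) 0)
      (nhdsWithin 0 (Ioi 0)) (nhds (fderiv ℝ u p v)) :=
    (hasDerivAt_iff_tendsto_slope.1 hline).mono_left (nhdsWithin_mono 0 fun _ ht => ne_of_gt ht)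
  have hmem : ∀ᶠ t : ℝ in nhds 0, p + t • v ∈ Ω :=
    (show ContinuousAt (fun t : ℝ => p + t • v) 0 by fun_prop).eventually_mem
      (hΩ.mem_nhds (by simpa using hp))
  refine le_of_tendsto hslope ?_
  filter_upwards [nhdsWithin_le_nhds hmem, Ioo_mem_nhdsGT (zero_lt_one' ℝ)] with t htΩ ht
  have hcomb : t • (p + v) + (1 - t) • p = p + t • v := by module
  have hchord := hconv (p + v) hpv p hp t ht (hcomb ▸ htΩ)
  rw [hcomb] at hchord
  rw [slope_def_field, sub_zero, zero_smul, add_zero, div_le_iff₀ ht.1]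
  linarith

theorem fderiv_apply_le_sub_of_mem_closedBall (hΩ : IsOpen Ω)
    (hconv : ∀ x ∈ Ω, ∀ y ∈ Ω, ∀ τ : ℝ, τ ∈ Ioo (0:ℝ) 1 →
      τ • x + (1 - τ) • y ∈ Ω → u (τ • x + (1 - τ) • y) ≤ τ * u x + (1 - τ) * u y)
    {y₀ y₁ : E} {τ ε M : ℝ} (hτ : τ ∈ Ioo (0:ℝ) 1)
    (hball₀ : ball y₀ (2 * ε) ⊆ Ω) (hball₁ : ball y₁ (2 * ε) ⊆ Ω)
    (hM : ∀ x ∈ ball y₀ (2 * ε) ∪ ball y₁ (2 * ε), u x ≤ M)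
    {p : E} (hp : p ∈ ball (τ • y₀ + (1 - τ) • y₁) ε ∩ Ω) (hd : DifferentiableAt ℝ u p)
    {w : E} (hw : w ∈ closedBall 0 ε) :
    fderiv ℝ u p w ≤ M - u p := by
  set q := τ • y₀ + (1 - τ) • y₁
  have hshift : ∀ y, y + (p - q) + w ∈ ball y (2 * ε) := fun y => by
    rw [mem_ball, dist_eq_norm, add_assoc, add_sub_cancel_left]
    rw [mem_closedBall, dist_zero_right] at hw
    have hpq : ‖p - q‖ < ε := by rw [← dist_eq_norm]; exact hp.1
    linarith [norm_add_le (p - q) w]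
  set v₀ := (1 - τ) • (y₀ - y₁) + w
  set v₁ := τ • (y₁ - y₀) + w
  have hm₀ : p + v₀ ∈ ball y₀ (2 * ε) := by
    convert hshift y₀ using 1; simp only [v₀, q]; module
  have hm₁ : p + v₁ ∈ ball y₁ (2 * ε) := by
    convert hshift y₁ using 1; simp only [v₁, q]; module
  have h₀ := fderiv_apply_le_sub hΩ hconv hp.2 (hball₀ hm₀) hd
  have h₁ := fderiv_apply_le_sub hΩ hconv hp.2 (hball₁ hm₁) hd
  have hu₀ := hM _ (Or.inl hm₀)
  have hu₁ := hM _ (Or.inr hm₁)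
  have hsplit : fderiv ℝ u p w = τ * fderiv ℝ u p v₀ + (1 - τ) * fderiv ℝ u p v₁ := by
    rw [← smul_eq_mul, ← smul_eq_mul, ← map_smul, ← map_smul, ← map_add]
    congr 1; simp only [v₀, v₁]; module
  obtain ⟨hτ0, hτ1⟩ := hτ
  rw [hsplit]
  nlinarith

end

theorem stmt_6_general {n : ℕ} (Ω : Set (EuclideanSpace ℝ (Fin n))) (hΩopen : IsOpen Ω)
    (u : EuclideanSpace ℝ (Fin n) → ℝ)
    (hconv : ∀ x ∈ Ω, ∀ y ∈ Ω, ∀ τ : ℝ, τ ∈ Ioo (0:ℝ) 1 →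
      τ • x + (1 - τ) • y ∈ Ω →
      u (τ • x + (1 - τ) • y) ≤ τ * u x + (1 - τ) * u y)
    (y₀ y₁ : EuclideanSpace ℝ (Fin n))
    (τ : ℝ) (hτ : τ ∈ Ioo (0:ℝ) 1) (ε : ℝ) (hε : 0 < ε) (C₀ : ℝ)
    (hball₀ : ball y₀ (2 * ε) ⊆ Ω) (hball₁ : ball y₁ (2 * ε) ⊆ Ω)
    (hbd : ∀ x ∈ ball y₀ (2 * ε) ∪ ball y₁ (2 * ε), |u x| ≤ 1)
    (hbdq : ∀ x ∈ ball (τ • y₀ + (1 - τ) • y₁) ε ∩ Ω, |u x| ≤ C₀) :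
    (∀ p ∈ ball (τ • y₀ + (1 - τ) • y₁) ε ∩ Ω, DifferentiableAt ℝ u p →
      ∀ ξ : EuclideanSpace ℝ (Fin n), ‖ξ‖ = 1 → inner ℝ ξ (y₁ - y₀) = (0:ℝ) →
        ε * fderiv ℝ u p ξ ≤ (1 + ‖y₀ - y₁‖ / (6 * ε)) * (1 + C₀) ∧
        ε * fderiv ℝ u p (-ξ) ≤ (1 + ‖y₀ - y₁‖ / (6 * ε)) * (1 + C₀)) ∧
    ∃ C : ℝ, ∀ p ∈ ball (τ • y₀ + (1 - τ) • y₁) ε ∩ Ω, DifferentiableAt ℝ u p →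
      ‖fderiv ℝ u p‖ ≤ C := by
  have hbound : ∀ p ∈ ball (τ • y₀ + (1 - τ) • y₁) ε ∩ Ω, DifferentiableAt ℝ u p →
      ∀ w ∈ closedBall (0 : EuclideanSpace ℝ (Fin n)) ε, fderiv ℝ u p w ≤ 1 + C₀ :=
    fun p hp hd w hw => by
      have := fderiv_apply_le_sub_of_mem_closedBall hΩopen hconv hτ hball₀ hball₁
        (fun x hx => (abs_le.1 (hbd x hx)).2) hp hd hw
      linarith [(abs_le.1 (hbdq p hp)).1]
  refine ⟨fun p hp hd ξ hξ _ => ?_, ⟨(1 + C₀) / ε, fun p hp hd => ?_⟩⟩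
  · have hεξ : ∀ ζ : EuclideanSpace ℝ (Fin n), ‖ζ‖ = 1 → ε * fderiv ℝ u p ζ ≤ 1 + C₀ :=
      fun ζ hζ => by
        rw [← smul_eq_mul, ← map_smul]
        exact hbound p hp hd _ (by simp [norm_smul, hζ, abs_of_pos hε])
    have hC₀ : 0 ≤ 1 + C₀ := by linarith [abs_nonneg (u p), hbdq p hp]
    have hgrow : 1 + C₀ ≤ (1 + ‖y₀ - y₁‖ / (6 * ε)) * (1 + C₀) :=
      le_mul_of_one_le_left hC₀ (le_add_of_nonneg_right (by positivity))
    exact ⟨(hεξ ξ hξ).trans hgrow, (hεξ (-ξ) (by rw [norm_neg, hξ])).trans hgrow⟩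
  · refine ContinuousLinearMap.opNorm_bound_of_ball_bound hε _ _ fun w hw => ?_
    rw [Real.norm_eq_abs, abs_le, neg_le, ← map_neg]
    exact ⟨hbound p hp hd _ (by simpa using hw), hbound p hp hd w hw⟩

/-- Bound on derivatives of a convex function in directions orthogonal to
`y₁ - y₀`, and the resulting full gradient bound near `q = τ•y₀+(1-τ)•y₁`. -/
theorem stmt_6 {n : ℕ} (Ω : Set (EuclideanSpace ℝ (Fin n))) (hΩopen : IsOpen Ω)
    (u : EuclideanSpace ℝ (Fin n) → ℝ)
    (hconv : ∀ x ∈ Ω, ∀ y ∈ Ω, ∀ τ : ℝ, τ ∈ Ioo (0:ℝ) 1 →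
      τ • x + (1 - τ) • y ∈ Ω →
      u (τ • x + (1 - τ) • y) ≤ τ * u x + (1 - τ) * u y)
    (y₀ y₁ : EuclideanSpace ℝ (Fin n)) (hne : y₀ ≠ y₁) (hy₀ : y₀ ∈ Ω) (hy₁ : y₁ ∈ Ω)
    (τ : ℝ) (hτ : τ ∈ Ioo (0:ℝ) 1) (ε : ℝ) (hε : 0 < ε) (C₀ : ℝ)
    (hdisj₀₁ : Disjoint (ball y₀ (3 * ε)) (ball y₁ (3 * ε)))
    (hdisj₀q : Disjoint (ball y₀ (3 * ε)) (ball (τ • y₀ + (1 - τ) • y₁) (3 * ε)))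
    (hdisj₁q : Disjoint (ball y₁ (3 * ε)) (ball (τ • y₀ + (1 - τ) • y₁) (3 * ε)))
    (hball₀ : ball y₀ (2 * ε) ⊆ Ω) (hball₁ : ball y₁ (2 * ε) ⊆ Ω)
    (hbd : ∀ x ∈ ball y₀ (2 * ε) ∪ ball y₁ (2 * ε), |u x| ≤ 1)
    (hbdq : ∀ x ∈ ball (τ • y₀ + (1 - τ) • y₁) ε ∩ Ω, |u x| ≤ C₀) :
    (∀ p ∈ ball (τ • y₀ + (1 - τ) • y₁) ε ∩ Ω, DifferentiableAt ℝ u p →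
      ∀ ξ : EuclideanSpace ℝ (Fin n), ‖ξ‖ = 1 → inner ℝ ξ (y₁ - y₀) = (0:ℝ) →
        ε * fderiv ℝ u p ξ ≤ (1 + ‖y₀ - y₁‖ / (6 * ε)) * (1 + C₀) ∧
        ε * fderiv ℝ u p (-ξ) ≤ (1 + ‖y₀ - y₁‖ / (6 * ε)) * (1 + C₀)) ∧
    ∃ C : ℝ, ∀ p ∈ ball (τ • y₀ + (1 - τ) • y₁) ε ∩ Ω, DifferentiableAt ℝ u p →
      ‖fderiv ℝ u p‖ ≤ C :=
  stmt_6_general Ω hΩopen u hconv y₀ y₁ τ hτ ε hε C₀ hball₀ hball₁ hbd hbdq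
end

section
/- Let Ω ⊆ ℝⁿ (not assumed connected) be an open set admitting a convex function u : Ω → ℝ whose gradient becomes unbounded near every point of ∂Ω. Then Ω is connected. -/
/-!
If `Ω` is not connected it is not convex, so some segment `[a, b]` with endpoints in `Ω` meets
`∂Ω` at a point `z = t a + s b`. Convex functions are continuous, so `u ≤ M` on small balls of
radius `r` around `a` and `b`. By the subgradient inequality, every gradient `p = ∇u(y)` satisfies
`p (w - y) ≤ M - u y` for `w` in these balls, and since `p` is affine also for `w` in the ball of
radius `r` around `z`. As `u` is bounded below near `z` (subgradient inequality again), this bounds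
`‖∇u(y)‖` by roughly `2 (M - inf u) / r` for `y` close to `z`, contradicting the blow-up at `z`.
-/

open Metric Set Filter Topology

/-- Unlike `ConvexOn`, this does not require `Ω` to be convex: the convexity inequality is
imposed whenever the convex combination happens to lie in `Ω`. -/
def ConvexWithin {E : Type*} [AddCommGroup E] [Module ℝ E] (Ω : Set E) (u : E → ℝ) : Prop :=
  ∀ x ∈ Ω, ∀ y ∈ Ω, ∀ τ : ℝ, τ ∈ Ioo (0:ℝ) 1 →
    τ • x + (1 - τ) • y ∈ Ω → u (τ • x + (1 - τ) • y) ≤ τ * u x + (1 - τ) * u y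

theorem IsPreconnected.inter_frontier_nonempty {X : Type*} [TopologicalSpace X] {s u : Set X}
    (hs : IsPreconnected s) (hu : IsOpen u) (hsu : (s ∩ u).Nonempty) (hnot : ¬s ⊆ u) :
    (s ∩ frontier u).Nonempty := by
  contrapose! hnot
  refine hs.subset_of_closure_inter_subset hu hsu fun x ⟨hxc, hxs⟩ => ?_
  by_contra hxu
  exact hnot.subset ⟨hxs, hu.frontier_eq ▸ ⟨hxc, hxu⟩⟩

theorem ContinuousLinearMap.norm_le_div_of_forall_apply_le {E : Type*} [NormedAddCommGroup E]
    [NormedSpace ℝ E] (p : StrongDual ℝ E) {r K : ℝ} (hr : 0 < r)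
    (h : ∀ v ∈ closedBall (0 : E) r, p v ≤ K) : ‖p‖ ≤ K / r := by
  refine p.opNorm_bound_of_ball_bound hr K fun v hv => abs_le.2 ⟨?_, h v hv⟩
  have := h (-v) (by simpa using hv)
  rw [map_neg] at this
  linarith

namespace ConvexWithin

variable {E : Type*} [NormedAddCommGroup E] [NormedSpace ℝ E] {Ω : Set E} {u : E → ℝ}

theorem convexOn (hu : ConvexWithin Ω u) {s : Set E} (hs : Convex ℝ s) (hsΩ : s ⊆ Ω) :
    ConvexOn ℝ s u := by
  refine convexOn_iff_forall_pos.2 ⟨hs, fun x hx y hy a b ha hb hab => ?_⟩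
  obtain rfl : b = 1 - a := by linarith
  exact hu x (hsΩ hx) y (hsΩ hy) a ⟨ha, by linarith⟩ (hsΩ (hs hx hy ha.le hb.le hab))

theorem continuousAt [FiniteDimensional ℝ E] (hΩ : IsOpen Ω) (hu : ConvexWithin Ω u) {x : E}
    (hx : x ∈ Ω) : ContinuousAt u x := by
  obtain ⟨ε, hε, hball⟩ := Metric.isOpen_iff.1 hΩ x hx
  exact ((hu.convexOn (convex_ball x ε) hball).continuousOn isOpen_ball).continuousAt
    (ball_mem_nhds x hε)

/-- Only points of `Ω` close to `x` on the segment `[x, w]` are used, so the segment need not lie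
in `Ω`. -/
theorem fderiv_apply_sub_le (hΩ : IsOpen Ω) (hu : ConvexWithin Ω u) {x w : E} (hx : x ∈ Ω)
    (hd : DifferentiableAt ℝ u x) (hw : w ∈ Ω) : fderiv ℝ u x (w - x) ≤ u w - u x := by
  set line : ℝ → E := fun τ => x + τ • (w - x)
  have hline : HasDerivAt line (w - x) 0 := by
    simpa only [id, one_smul] using ((hasDerivAt_id (0 : ℝ)).smul_const (w - x)).const_add x
  have hderiv : HasDerivAt (u ∘ line) (fderiv ℝ u x (w - x)) 0 :=
    hd.hasFDerivAt.comp_hasDerivAt_of_eq 0 hline (by simp [line])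
  have hnear : ∀ᶠ τ in 𝓝 (0 : ℝ), line τ ∈ Ω :=
    hline.continuousAt.eventually_mem (by simpa [line] using hΩ.mem_nhds hx)
  refine le_of_tendsto hderiv.tendsto_slope_zero_right ?_
  filter_upwards [nhdsWithin_le_nhds hnear, Ioo_mem_nhdsGT one_pos] with τ hτΩ hτ
  have hcomb : τ • w + (1 - τ) • x = line τ := by simp only [line]; module
  have := hu w hw x hx τ hτ (hcomb ▸ hτΩ)
  rw [hcomb] at this
  simp only [Function.comp, zero_add, zero_smul, add_zero, smul_eq_mul, line] at this ⊢
  rw [inv_mul_le_iff₀ hτ.1]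
  linarith

/-- `p (w - y) ≤ M - u y` holds at `w = a + v` and `w = b + v`, hence, `p` being affine, at
`w = z + v`; the `‖y - z‖` term pays for comparing `p v` with `p (z + v - y)`. -/
theorem norm_fderiv_mul_le (hΩ : IsOpen Ω) (hu : ConvexWithin Ω u) {a b z y : E} {r M : ℝ}
    (hz : z ∈ segment ℝ a b) (hr : 0 < r) (ha : closedBall a r ⊆ Ω ∩ {w | u w ≤ M})
    (hb : closedBall b r ⊆ Ω ∩ {w | u w ≤ M}) (hy : y ∈ Ω) (hd : DifferentiableAt ℝ u y) :
    ‖fderiv ℝ u y‖ * r ≤ M - u y + ‖fderiv ℝ u y‖ * ‖y - z‖ := by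
  set p := fderiv ℝ u y
  have hshift : ∀ c, closedBall c r ⊆ Ω ∩ {w | u w ≤ M} →
      ∀ v ∈ closedBall (0 : E) r, p (v + c) ≤ M - u y + p y := by
    intro c hc v hv
    obtain ⟨hcΩ, hcM⟩ := hc (by simpa using hv : v + c ∈ closedBall c r)
    have := hu.fderiv_apply_sub_le hΩ hy hd hcΩ
    rw [map_sub] at this
    linarith [show u (v + c) ≤ M from hcM]
  have hbound : ∀ v ∈ closedBall (0 : E) r, p v ≤ M - u y + ‖p‖ * ‖y - z‖ := by
    intro v hv
    have hzv : p (v + z) ≤ M - u y + p y :=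
      (convex_halfSpace_le p.toLinearMap.isLinear _).segment_subset (hshift a ha v hv)
        (hshift b hb v hv) ((mem_segment_translate ℝ v).2 hz)
    have hyz : p (y - z) ≤ ‖p‖ * ‖y - z‖ := (le_abs_self _).trans (p.le_opNorm _)
    rw [map_add] at hzv
    rw [map_sub] at hyz
    linarith
  exact (le_div_iff₀ hr).1 (p.norm_le_div_of_forall_apply_le hr hbound)

/-- The lower bound on `u` near `z` comes from the subgradient inequality at an arbitrary point
of differentiability `y₀`. -/
theorem exists_norm_fderiv_le_near_segment [FiniteDimensional ℝ E] (hΩ : IsOpen Ω)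
    (hu : ConvexWithin Ω u) {a b z y₀ : E} (ha : a ∈ Ω) (hb : b ∈ Ω) (hz : z ∈ segment ℝ a b)
    (hy₀ : y₀ ∈ Ω) (hd₀ : DifferentiableAt ℝ u y₀) :
    ∃ δ > 0, ∃ C, ∀ y ∈ ball z δ ∩ Ω, DifferentiableAt ℝ u y → ‖fderiv ℝ u y‖ ≤ C := by
  set M := max (u a) (u b) + 1
  have hsublevel : ∀ c ∈ Ω, u c < M → ∀ᶠ r in 𝓝 (0 : ℝ), closedBall c r ⊆ Ω ∩ {w | u w ≤ M} :=
    fun c hc hcM => eventually_closedBall_subset (inter_mem (hΩ.mem_nhds hc)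
      (((hu.continuousAt hΩ hc).eventually_lt continuousAt_const hcM).mono fun _ => le_of_lt))
  have hsmall : ∀ᶠ r in 𝓝[>] (0 : ℝ),
      closedBall a r ⊆ Ω ∩ {w | u w ≤ M} ∧ closedBall b r ⊆ Ω ∩ {w | u w ≤ M} :=
    nhdsWithin_le_nhds <| (hsublevel a ha ((le_max_left _ _).trans_lt (lt_add_one _))).and
      (hsublevel b hb ((le_max_right _ _).trans_lt (lt_add_one _)))
  obtain ⟨r, ⟨hra, hrb⟩, hr⟩ := (hsmall.and self_mem_nhdsWithin).exists
  set p₀ := fderiv ℝ u y₀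
  set m := u y₀ - ‖p₀‖ * (r / 2 + ‖z - y₀‖)
  refine ⟨r / 2, half_pos hr, 2 * (M - m) / r, fun y ⟨hyz, hyΩ⟩ hd => ?_⟩
  rw [mem_ball, dist_eq_norm] at hyz
  have hm : m ≤ u y := by
    have hsub : p₀ (y - y₀) ≤ u y - u y₀ := hu.fderiv_apply_sub_le hΩ hy₀ hd₀ hyΩ
    have hp₀ : -(‖p₀‖ * ‖y - y₀‖) ≤ p₀ (y - y₀) :=
      (neg_le_neg (p₀.le_opNorm _)).trans (neg_abs_le _)
    have htri : ‖y - y₀‖ ≤ r / 2 + ‖z - y₀‖ := by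
      linarith [norm_sub_le_norm_sub_add_norm_sub y z y₀]
    simp only [m]
    linarith [mul_le_mul_of_nonneg_left htri (norm_nonneg p₀)]
  have hkey := hu.norm_fderiv_mul_le hΩ hz hr hra hrb hyΩ hd
  have hclose := mul_le_mul_of_nonneg_left hyz.le (norm_nonneg (fderiv ℝ u y))
  rw [le_div_iff₀ hr]
  linarith

end ConvexWithin

/-- An open set admitting a convex function with gradient blowing up at every
boundary point is connected. -/
theorem stmt_7 {n : ℕ} (Ω : Set (EuclideanSpace ℝ (Fin n))) (hΩopen : IsOpen Ω)
    (u : EuclideanSpace ℝ (Fin n) → ℝ)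
    (hconv : ∀ x ∈ Ω, ∀ y ∈ Ω, ∀ τ : ℝ, τ ∈ Ioo (0:ℝ) 1 →
      τ • x + (1 - τ) • y ∈ Ω →
      u (τ • x + (1 - τ) • y) ≤ τ * u x + (1 - τ) * u y)
    (hblow : ∀ x ∈ frontier Ω, ∀ δ > (0:ℝ), ∀ C : ℝ,
      ∃ y ∈ ball x δ ∩ Ω, DifferentiableAt ℝ u y ∧ C < ‖fderiv ℝ u y‖) :
    IsPreconnected Ω := by
  have hu : ConvexWithin Ω u := hconv
  by_contra hconn
  obtain ⟨a, ha, b, hb, hab⟩ : ∃ a ∈ Ω, ∃ b ∈ Ω, ¬segment ℝ a b ⊆ Ω := by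
    simpa [convex_iff_segment_subset] using mt Convex.isPreconnected hconn
  obtain ⟨z, hzab, hz⟩ := (convex_segment a b).isPreconnected.inter_frontier_nonempty hΩopen
    ⟨a, left_mem_segment ℝ a b, ha⟩ hab
  obtain ⟨y₀, ⟨-, hy₀⟩, hd₀, -⟩ := hblow z hz 1 one_pos 0
  obtain ⟨δ, hδ, C, hC⟩ := hu.exists_norm_fderiv_le_near_segment hΩopen ha hb hzab hy₀ hd₀
  obtain ⟨y, hy, hd, hCy⟩ := hblow z hz δ hδ C
  exact (hC y hy hd).not_gt hCy
end

section
/- A domain Ω ⊆ ℝⁿ with nonempty boundary admits a convex function u : Ω → ℝ with gradient unbounded near ∂Ω if and only if Ω is convex. -/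
/-!
If `Ω` is not convex, some segment `[p, q]` with endpoints in `Ω` meets `∂Ω` at a point `x`.
A convex `u` is bounded, say by `K`, on closed balls of a fixed radius `2r` about `p` and `q`.
For `y` close to `x`, the translate of `[p, q]` by `y - x` passes through `y`, and the
supporting-hyperplane inequality `u v ≥ u y + Du(y) (v - y)` at the points of the `r`-balls about
its endpoints gives `‖Du(y)‖ ≤ (K - u y) / r`, while convexity along the line through `y` and
`p + (y - x)` bounds `u y` from below. So the gradient stays bounded near `x`.

Conversely, on a convex `Ω` the distance `d` to the complement is concave, so `-√d` is convex.
Wherever `d` is differentiable (a dense set, by Rademacher) its gradient has norm at least `1`,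
so `‖D(-√d)‖ ≥ 1 / (2√d)` blows up at `∂Ω`.
-/

open Metric Set Filter Topology Convex

section

variable {E : Type*} [NormedAddCommGroup E] [NormedSpace ℝ E]

/-- Convexity of `u` on a possibly nonconvex `Ω`: the chord inequality is only required at points
of the chord that lie in `Ω`. -/
def ChordConvexOn (Ω : Set E) (u : E → ℝ) : Prop :=
  ∀ x ∈ Ω, ∀ y ∈ Ω, ∀ τ : ℝ, τ ∈ Ioo (0:ℝ) 1 →
    τ • x + (1 - τ) • y ∈ Ω → u (τ • x + (1 - τ) • y) ≤ τ * u x + (1 - τ) * u y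

def GradientUnboundedNearFrontier (Ω : Set E) (u : E → ℝ) : Prop :=
  ∀ x ∈ frontier Ω, ∀ δ > (0:ℝ), ∀ C : ℝ,
    ∃ y ∈ ball x δ ∩ Ω, DifferentiableAt ℝ u y ∧ C < ‖fderiv ℝ u y‖

theorem DifferentiableAt.fderiv_apply_le_of_eventually_le {f : E → ℝ} {x v : E} {c : ℝ}
    (hf : DifferentiableAt ℝ f x) (h : ∀ᶠ t in 𝓝[>] (0:ℝ), f (x + t • v) ≤ f x + t * c) :
    fderiv ℝ f x v ≤ c := by
  have hlim := hf.hasFDerivAt.lim v (c := fun t : ℝ => t⁻¹)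
    (tendsto_abs_atTop_atTop.comp tendsto_inv_nhdsGT_zero)
  simp only [inv_inv, smul_eq_mul] at hlim
  refine le_of_tendsto hlim ?_
  filter_upwards [h, self_mem_nhdsWithin] with t ht (htpos : 0 < t)
  rw [inv_mul_le_iff₀ htpos]
  linarith

theorem LipschitzWith.dense_differentiableAt [FiniteDimensional ℝ E] {F : Type*}
    [NormedAddCommGroup F] [NormedSpace ℝ F] [FiniteDimensional ℝ F] {C : NNReal} {f : E → F}
    (hf : LipschitzWith C f) : Dense {x | DifferentiableAt ℝ f x} :=
  let _ : MeasurableSpace E := borel E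
  have _ : BorelSpace E := ⟨rfl⟩
  MeasureTheory.Measure.dense_of_ae (hf.ae_differentiableAt (μ := (Module.finBasis ℝ E).addHaar))

theorem ConcaveOn.sqrt {s : Set E} {f : E → ℝ} (hf : ConcaveOn ℝ s f) (h0 : ∀ x ∈ s, 0 ≤ f x) :
    ConcaveOn ℝ s (fun x => √(f x)) := by
  refine ⟨hf.1, fun x hx y hy a b ha hb hab => ?_⟩
  calc a • √(f x) + b • √(f y) ≤ √(a • f x + b • f y) :=
        Real.strictConcaveOn_sqrt.concaveOn.2 (h0 x hx) (h0 y hy) ha hb hab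
    _ ≤ √(f (a • x + b • y)) := Real.sqrt_le_sqrt (hf.2 hx hy ha hb hab)

theorem Convex.concaveOn_infDist_compl {s : Set E} (hs : Convex ℝ s) (ho : IsOpen s) :
    ConcaveOn ℝ s (infDist · sᶜ) := by
  refine ⟨hs, fun x hx y hy a b ha hb hab => ?_⟩
  rcases sᶜ.eq_empty_or_nonempty with hc | hc
  · simp [hc]
  have hpos : ∀ w ∈ s, 0 < infDist w sᶜ := fun w hw =>
    (ho.isClosed_compl.notMem_iff_infDist_pos hc).1 (by simpa using hw)
  set R := a * infDist x sᶜ + b * infDist y sᶜ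
  have hR : 0 < R := by
    rcases ha.eq_or_lt with rfl | ha'
    · simp only [R, zero_mul, zero_add, show b = 1 by linarith, one_mul]; exact hpos y hy
    · have := hpos x hx; have := hpos y hy; positivity
  simp only [smul_eq_mul]
  -- `ball (a • x + b • y) R = a • ball x (infDist x sᶜ) + b • ball y (infDist y sᶜ) ⊆ s`
  refine (le_infDist hc).2 fun z hz => not_lt.1 fun hzR => hz ?_
  have hshift : ∀ w ∈ s, w + (infDist w sᶜ / R) • (z - (a • x + b • y)) ∈ s := fun w hw =>
    ball_infDist_compl_subset <| by
      rw [mem_ball, dist_eq_norm, add_sub_cancel_left, norm_smul, Real.norm_eq_abs,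
        abs_of_pos (div_pos (hpos w hw) hR), ← dist_eq_norm, dist_comm, div_mul_comm]
      exact mul_lt_of_lt_one_left (hpos w hw) ((div_lt_one hR).2 hzR)
  convert hs (hshift x hx) (hshift y hy) ha hb hab using 1
  have hcoef : a * (infDist x sᶜ / R) + b * (infDist y sᶜ / R) = 1 := by
    rw [← mul_div_assoc, ← mul_div_assoc, ← add_div, div_self hR.ne']
  calc z = (a • x + b • y) + (a * (infDist x sᶜ / R) + b * (infDist y sᶜ / R)) •
        (z - (a • x + b • y)) := by rw [hcoef, one_smul, add_sub_cancel]
    _ = _ := by module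

theorem IsClosed.one_le_norm_fderiv_infDist [ProperSpace E] {s : Set E} {y : E}
    (hs : IsClosed s) (hne : s.Nonempty) (hy : y ∉ s)
    (hd : DifferentiableAt ℝ (infDist · s) y) : 1 ≤ ‖fderiv ℝ (infDist · s) y‖ := by
  obtain ⟨z, hz, hzd⟩ := hs.exists_infDist_eq_dist hne y
  have hpos : 0 < infDist y s := (hs.notMem_iff_infDist_pos hne).1 hy
  have hslope : fderiv ℝ (infDist · s) y (z - y) ≤ -infDist y s := by
    refine hd.fderiv_apply_le_of_eventually_le ?_
    filter_upwards [Ioo_mem_nhdsGT (zero_lt_one' ℝ)] with t ht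
    calc infDist (y + t • (z - y)) s ≤ dist (y + t • (z - y)) z := infDist_le_dist_of_mem hz
      _ = (1 - t) * dist y z := by
        rw [dist_eq_norm, dist_eq_norm, ← abs_of_pos (sub_pos.2 ht.2), ← Real.norm_eq_abs,
          ← norm_smul]
        congr 1; module
      _ = infDist y s + t * -infDist y s := by rw [hzd]; ring
  have : infDist y s ≤ ‖fderiv ℝ (infDist · s) y‖ * infDist y s :=
    calc infDist y s ≤ ‖fderiv ℝ (infDist · s) y (z - y)‖ := by
          rw [Real.norm_eq_abs]; exact le_abs.2 (Or.inr (by linarith))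
      _ ≤ ‖fderiv ℝ (infDist · s) y‖ * ‖z - y‖ := ContinuousLinearMap.le_opNorm _ _
      _ = ‖fderiv ℝ (infDist · s) y‖ * infDist y s := by rw [hzd, dist_comm, dist_eq_norm]
  exact le_of_mul_le_mul_right (by simpa using this) hpos

theorem IsOpen.gradientUnboundedNearFrontier_neg_sqrt_infDist [FiniteDimensional ℝ E]
    {Ω : Set E} (hΩ : IsOpen Ω) : GradientUnboundedNearFrontier Ω (fun x => -√(infDist x Ωᶜ)) := by
  intro x hx δ hδ C
  have hxΩ : x ∈ Ωᶜ := (hΩ.frontier_eq ▸ hx).2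
  set m := |C| + 1
  have hm0 : 0 < m := by positivity
  set ε := (2 * m)⁻¹ ^ 2
  set V := ball x δ ∩ Ω ∩ {w | infDist w Ωᶜ < ε}
  have hVo : IsOpen V :=
    (isOpen_ball.inter hΩ).inter (isOpen_lt (continuous_infDist_pt _) continuous_const)
  have hVne : V.Nonempty := by
    obtain ⟨w, hw, hxw⟩ := mem_closure_iff.1 (frontier_subset_closure hx) (min δ ε)
      (by positivity)
    rw [dist_comm] at hxw
    exact ⟨w, ⟨mem_ball.2 (hxw.trans_le (min_le_left _ _)), hw⟩,
      (infDist_le_dist_of_mem hxΩ).trans_lt (hxw.trans_le (min_le_right _ _))⟩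
  obtain ⟨y, ⟨⟨hyx, hy⟩, hyε⟩, hd⟩ :=
    (lipschitz_infDist_pt Ωᶜ).dense_differentiableAt.inter_open_nonempty V hVo hVne
  have hdy : 0 < infDist y Ωᶜ :=
    (hΩ.isClosed_compl.notMem_iff_infDist_pos ⟨x, hxΩ⟩).1 (by simpa using hy)
  have hder : HasFDerivAt (fun x => -√(infDist x Ωᶜ)) _ y := (hd.hasFDerivAt.sqrt hdy.ne').neg
  refine ⟨y, ⟨hyx, hy⟩, hder.differentiableAt, ?_⟩
  have hgrad := hΩ.isClosed_compl.one_le_norm_fderiv_infDist ⟨x, hxΩ⟩ (by simpa using hy) hd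
  have hsqrt : √(infDist y Ωᶜ) < (2 * m)⁻¹ := (Real.sqrt_lt' (by positivity)).2 hyε
  rw [hder.fderiv, norm_neg, norm_smul, Real.norm_eq_abs, abs_of_pos (by positivity)]
  have hm : m < 1 / (2 * √(infDist y Ωᶜ)) := by
    have : 0 < √(infDist y Ωᶜ) := Real.sqrt_pos.2 hdy
    rw [lt_div_iff₀ (by positivity)]
    calc m * (2 * √(infDist y Ωᶜ)) < m * (2 * (2 * m)⁻¹) := by gcongr
      _ = 1 := by field_simp
  calc C < m := by linarith [le_abs_self C]
    _ < 1 / (2 * √(infDist y Ωᶜ)) := hm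
    _ ≤ _ := le_mul_of_one_le_right (by positivity) hgrad

theorem ConvexOn.chordConvexOn {Ω : Set E} {u : E → ℝ} (h : ConvexOn ℝ Ω u) :
    ChordConvexOn Ω u := fun x hx y hy τ hτ _ =>
  h.2 hx hy hτ.1.le (by linarith [hτ.2]) (by ring)

namespace ChordConvexOn

variable {Ω : Set E} {u : E → ℝ}

theorem convexOn {s : Set E} (h : ChordConvexOn Ω u) (hs : Convex ℝ s) (hsΩ : s ⊆ Ω) :
    ConvexOn ℝ s u := by
  refine convexOn_iff_forall_pos.2 ⟨hs, fun x hx y hy a b ha hb hab => ?_⟩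
  obtain rfl : b = 1 - a := by linarith
  exact h x (hsΩ hx) y (hsΩ hy) a ⟨ha, by linarith⟩ (hsΩ (hs hx hy ha.le hb.le hab))

theorem continuousOn [FiniteDimensional ℝ E] (h : ChordConvexOn Ω u) (hΩ : IsOpen Ω) :
    ContinuousOn u Ω := by
  intro x hx
  obtain ⟨ε, hε, hball⟩ := isOpen_iff.1 hΩ x hx
  exact ((h.convexOn (convex_ball x ε) hball).continuousOn isOpen_ball).continuousAt
    (ball_mem_nhds x hε) |>.continuousWithinAt

theorem fderiv_apply_sub_le (h : ChordConvexOn Ω u) (hΩ : IsOpen Ω) {y q : E} (hy : y ∈ Ω)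
    (hq : q ∈ Ω) (hd : DifferentiableAt ℝ u y) : fderiv ℝ u y (q - y) ≤ u q - u y := by
  refine hd.fderiv_apply_le_of_eventually_le ?_
  have hline : Tendsto (fun t : ℝ => y + t • (q - y)) (𝓝[>] 0) (𝓝 y) := by
    have : Continuous (fun t : ℝ => y + t • (q - y)) := by fun_prop
    simpa using (this.tendsto 0).mono_left nhdsWithin_le_nhds
  filter_upwards [hline (hΩ.mem_nhds hy), Ioo_mem_nhdsGT (zero_lt_one' ℝ)] with t hmem ht
  have hcomb : y + t • (q - y) = t • q + (1 - t) • y := by module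
  rw [Set.mem_preimage, hcomb] at hmem
  rw [hcomb]
  linarith [h q hq y hy t ht hmem]

theorem fderiv_apply_le_of_mem_segment (h : ChordConvexOn Ω u) (hΩ : IsOpen Ω) {y a b : E}
    {r K : ℝ} (hy : y ∈ Ω) (hd : DifferentiableAt ℝ u y) (hyab : y ∈ [a -[ℝ] b])
    (ha : closedBall a r ⊆ Ω) (hb : closedBall b r ⊆ Ω)
    (hK : ∀ v ∈ closedBall a r ∪ closedBall b r, u v ≤ K) {z : E} (hz : ‖z‖ ≤ r) :
    fderiv ℝ u y z ≤ K - u y := by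
  obtain ⟨s, t, hs, ht, hst, rfl⟩ := hyab
  have haz : a + z ∈ closedBall a r := by simpa [mem_closedBall, dist_eq_norm] using hz
  have hbz : b + z ∈ closedBall b r := by simpa [mem_closedBall, dist_eq_norm] using hz
  have hsplit : z = s • (a + z - (s • a + t • b)) + t • (b + z - (s • a + t • b)) := by
    obtain rfl : t = 1 - s := by linarith
    module
  have h₁ := h.fderiv_apply_sub_le hΩ hy (ha haz) hd
  have h₂ := h.fderiv_apply_sub_le hΩ hy (hb hbz) hd
  rw [hsplit, map_add, map_smul, map_smul, smul_eq_mul, smul_eq_mul]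
  have h₁' := mul_le_mul_of_nonneg_left (h₁.trans (sub_le_sub_right (hK _ (Or.inl haz)) _)) hs
  have h₂' := mul_le_mul_of_nonneg_left (h₂.trans (sub_le_sub_right (hK _ (Or.inr hbz)) _)) ht
  linear_combination h₁' + h₂' + (K - u (s • a + t • b)) * hst

theorem norm_fderiv_le_of_mem_segment (h : ChordConvexOn Ω u) (hΩ : IsOpen Ω) {y a b : E}
    {r K : ℝ} (hr : 0 < r) (hy : y ∈ Ω) (hd : DifferentiableAt ℝ u y) (hyab : y ∈ [a -[ℝ] b])
    (ha : closedBall a r ⊆ Ω) (hb : closedBall b r ⊆ Ω)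
    (hK : ∀ v ∈ closedBall a r ∪ closedBall b r, u v ≤ K) :
    ‖fderiv ℝ u y‖ ≤ (K - u y) / r := by
  refine ContinuousLinearMap.opNorm_bound_of_ball_bound hr _ _ fun z hz => ?_
  have hz : ‖z‖ ≤ r := by simpa using hz
  have hle := h.fderiv_apply_le_of_mem_segment hΩ hy hd hyab ha hb hK hz
  have hge := h.fderiv_apply_le_of_mem_segment hΩ hy hd hyab ha hb hK (z := -z) (by simpa)
  rw [map_neg] at hge
  exact abs_le.2 ⟨by linarith, hle⟩

theorem neg_le_of_abs_le_on_closedBall (h : ChordConvexOn Ω u) {a y : E} {r K : ℝ} (hr : 0 < r)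
    (hy : y ∈ Ω) (ha : closedBall a r ⊆ Ω) (hK : ∀ v ∈ closedBall a r, |u v| ≤ K) :
    -(K * (1 + 2 * dist a y / r)) ≤ u y := by
  have hua := neg_le_of_abs_le (hK a (mem_closedBall_self hr.le))
  rcases eq_or_ne a y with rfl | hay
  · simpa using hua
  set d := dist a y
  have hd : 0 < d := dist_pos.2 hay
  -- `a` lies on the segment from `y` to the point `c` of the sphere about `a` opposite to `y`.
  set c := a + (r / d) • (a - y)
  have hc : c ∈ closedBall a r := by
    rw [mem_closedBall, dist_eq_norm, add_sub_cancel_left, norm_smul, ← dist_eq_norm,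
      Real.norm_eq_abs, abs_of_pos (by positivity), div_mul_cancel₀ r hd.ne']
  set τ := d / (d + r)
  have hτ : τ ∈ Ioo (0:ℝ) 1 := ⟨by positivity, (div_lt_one (by positivity)).2 (by linarith)⟩
  have hcomb : τ • c + (1 - τ) • y = a := by
    simp only [c, τ]
    match_scalars <;> field_simp
    ring
  have key := h c (ha hc) y hy τ hτ (hcomb ▸ ha (mem_closedBall_self hr.le))
  rw [hcomb] at key
  have huc := le_of_abs_le (hK c hc)
  simp only [τ] at key
  rw [neg_le_iff_add_nonneg]
  field_simp at key ⊢
  nlinarith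

end ChordConvexOn

theorem IsOpen.exists_mem_frontier_segment {Ω : Set E} (hΩ : IsOpen Ω) {p q : E} (hp : p ∈ Ω)
    (hpq : ¬ [p -[ℝ] q] ⊆ Ω) : ∃ x ∈ frontier Ω, x ∈ [p -[ℝ] q] := by
  have : ¬ closure Ω ∩ [p -[ℝ] q] ⊆ Ω := fun h => hpq <|
    (convex_segment p q).isPreconnected.subset_of_closure_inter_subset hΩ
      ⟨p, left_mem_segment ℝ p q, hp⟩ h
  obtain ⟨x, ⟨hxcl, hxseg⟩, hxΩ⟩ := not_subset.1 this
  exact ⟨x, hΩ.frontier_eq ▸ ⟨hxcl, hxΩ⟩, hxseg⟩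

theorem ChordConvexOn.convex_of_gradientUnboundedNearFrontier [FiniteDimensional ℝ E]
    {Ω : Set E} {u : E → ℝ} (h : ChordConvexOn Ω u) (hgrad : GradientUnboundedNearFrontier Ω u)
    (hΩ : IsOpen Ω) : Convex ℝ Ω := by
  refine convex_iff_segment_subset.2 fun p hp q hq => by_contra fun hpq => ?_
  obtain ⟨x, hxfr, hxpq⟩ := hΩ.exists_mem_frontier_segment hp hpq
  have hpair : IsCompact ({p, q} : Set E) := (toFinite {p, q}).isCompact
  obtain ⟨δ, hδ, hthick⟩ := hpair.exists_cthickening_subset_open hΩ (pair_subset hp hq)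
  obtain ⟨K, hK⟩ := (hpair.cthickening (r := δ)).exists_bound_of_continuousOn
    ((h.continuousOn hΩ).mono hthick)
  set r := δ / 2 with hr_def
  have hr : 0 < r := by positivity
  obtain ⟨y, ⟨hyx, hy⟩, hd, hbig⟩ :=
    hgrad x hxfr r hr ((K + K * (1 + 2 * dist p x / r)) / r)
  have hball : ∀ w ∈ ({p, q} : Set E), closedBall (w + (y - x)) r ⊆ cthickening δ {p, q} :=
    fun w hw => (closedBall_subset_closedBall' (by
      rw [dist_eq_norm, add_sub_cancel_left, ← dist_eq_norm]
      linarith [mem_ball.1 hyx])).trans (closedBall_subset_cthickening hw δ)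
  have hp' := hball p (mem_insert p _)
  have hq' := hball q (mem_insert_of_mem p rfl)
  have hyseg : y ∈ [p + (y - x) -[ℝ] q + (y - x)] := by
    simpa [add_comm _ (y - x)] using (mem_segment_translate ℝ (y - x)).2 hxpq
  have hupper := h.norm_fderiv_le_of_mem_segment hΩ hr hy hd hyseg (hp'.trans hthick)
    (hq'.trans hthick) fun v hv => (le_abs_self _).trans
      (hK v (hv.elim (fun hv => hp' hv) fun hv => hq' hv))
  have hlower := h.neg_le_of_abs_le_on_closedBall hr hy (hp'.trans hthick) fun v hv => hK v (hp' hv)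
  rw [show dist (p + (y - x)) y = dist p x by rw [dist_eq_norm, dist_eq_norm]; congr 1; abel]
    at hlower
  have : (K - u y) / r ≤ (K + K * (1 + 2 * dist p x / r)) / r := by gcongr; linarith
  linarith

end

theorem stmt_10_general {n : ℕ} (Ω : Set (EuclideanSpace ℝ (Fin n)))
    (hΩopen : IsOpen Ω) :
    (∃ u : EuclideanSpace ℝ (Fin n) → ℝ,
      (∀ x ∈ Ω, ∀ y ∈ Ω, ∀ τ : ℝ, τ ∈ Ioo (0:ℝ) 1 →
        τ • x + (1 - τ) • y ∈ Ω →
        u (τ • x + (1 - τ) • y) ≤ τ * u x + (1 - τ) * u y) ∧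
      ∀ x ∈ frontier Ω, ∀ δ > (0:ℝ), ∀ C : ℝ,
        ∃ y ∈ ball x δ ∩ Ω, DifferentiableAt ℝ u y ∧ C < ‖fderiv ℝ u y‖) ↔
    Convex ℝ Ω := by
  constructor
  · rintro ⟨u, hconv, hgrad⟩
    exact ChordConvexOn.convex_of_gradientUnboundedNearFrontier hconv hgrad hΩopen
  · intro hΩ
    exact ⟨_,
      ((hΩ.concaveOn_infDist_compl hΩopen).sqrt fun _ _ => infDist_nonneg).neg.chordConvexOn,
      hΩopen.gradientUnboundedNearFrontier_neg_sqrt_infDist⟩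

/-- A domain with nonempty boundary admits a convex function with gradient
unbounded near the boundary iff it is convex. -/
theorem stmt_10 {n : ℕ} (Ω : Set (EuclideanSpace ℝ (Fin n)))
    (hΩopen : IsOpen Ω) (hΩconn : IsPreconnected Ω) (hΩne : Ω.Nonempty)
    (hfr : (frontier Ω).Nonempty) :
    (∃ u : EuclideanSpace ℝ (Fin n) → ℝ,
      (∀ x ∈ Ω, ∀ y ∈ Ω, ∀ τ : ℝ, τ ∈ Ioo (0:ℝ) 1 →
        τ • x + (1 - τ) • y ∈ Ω →
        u (τ • x + (1 - τ) • y) ≤ τ * u x + (1 - τ) * u y) ∧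
      ∀ x ∈ frontier Ω, ∀ δ > (0:ℝ), ∀ C : ℝ,
        ∃ y ∈ ball x δ ∩ Ω, DifferentiableAt ℝ u y ∧ C < ‖fderiv ℝ u y‖) ↔
    Convex ℝ Ω :=
  stmt_10_general Ω hΩopen
end

section
/- Let Ω ⊆ ℝⁿ be open and star-shaped with respect to 0 ∈ Ω, and suppose Ω is not convex. Then there exist y₀, y₁ ∈ Ω and τ ∈ (0,1) such that the segment [y₀, y₁] meets ∂Ω exactly in points p with μp ∈ Ω for all μ ∈ [0,1); in particular, there exists a point of ∂₁Ω := ∂Ω \ {x ∈ ∂Ω : ∃ε>0, tx ∈ ∂Ω ∀t ∈ (1-ε,1+ε)} of the form τy₀ + (1-τ)y₁ with y₀, y₁ ∈ Ω. -/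
open Metric Set

/-- If a star-shaped open set is not convex, some convex combination of two of
its points lies in `∂₁Ω`, with the whole open radial segment inside `Ω`. -/
theorem stmt_11 {n : ℕ} (Ω : Set (EuclideanSpace ℝ (Fin n)))
    (hΩopen : IsOpen Ω) (h0 : (0 : EuclideanSpace ℝ (Fin n)) ∈ Ω)
    (hstar : ∀ x ∈ Ω, ∀ t : ℝ, t ∈ Icc (0:ℝ) 1 → t • x ∈ Ω)
    (hnotconv : ¬ Convex ℝ Ω) :
    ∃ y₀ ∈ Ω, ∃ y₁ ∈ Ω, ∃ τ ∈ Ioo (0:ℝ) 1,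
      τ • y₀ + (1 - τ) • y₁ ∈ frontier Ω ∧
      (∀ μ : ℝ, 0 ≤ μ → μ < 1 → μ • (τ • y₀ + (1 - τ) • y₁) ∈ Ω) ∧
      ¬ ∃ ε > (0:ℝ), ∀ t ∈ Ioo (1 - ε) (1 + ε),
          t • (τ • y₀ + (1 - τ) • y₁) ∈ frontier Ω := by
  rw [convex_iff_forall_pos] at hnotconv
  push_neg at hnotconv
  obtain ⟨x, hx, y, hy, a, b, ha, hb, hab, hz⟩ := hnotconv
  set z := a • x + b • y with hzdef
  have hz0 : z ≠ 0 := fun h => hz (h ▸ h0)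
  have hznorm : 0 < ‖z‖ := norm_pos_iff.mpr hz0
  set S : Set ℝ := {μ : ℝ | 0 ≤ μ ∧ μ • z ∈ Ω} with hS
  have h0S : (0 : ℝ) ∈ S := ⟨le_refl _, by simpa using h0⟩
  have hSne : S.Nonempty := ⟨0, h0S⟩
  have hSbdd : BddAbove S := by
    refine ⟨1, fun μ hμ => ?_⟩
    by_contra hμ1
    push_neg at hμ1
    have hμpos : (0:ℝ) < μ := lt_trans one_pos hμ1
    have h1 : μ⁻¹ ∈ Icc (0:ℝ) 1 :=
      ⟨inv_nonneg.mpr hμpos.le, inv_le_one_of_one_le₀ hμ1.le⟩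
    have := hstar _ hμ.2 _ h1
    rw [smul_smul, inv_mul_cancel₀ hμpos.ne', one_smul] at this
    exact hz this
  set lam := sSup S with hlam
  have hlam1 : lam ≤ 1 := csSup_le hSne (fun μ hμ => by
    by_contra hc; push_neg at hc
    have hμpos : (0:ℝ) < μ := lt_trans one_pos hc
    have h1 : μ⁻¹ ∈ Icc (0:ℝ) 1 :=
      ⟨inv_nonneg.mpr hμpos.le, inv_le_one_of_one_le₀ hc.le⟩
    have := hstar _ hμ.2 _ h1
    rw [smul_smul, inv_mul_cancel₀ hμpos.ne', one_smul] at this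
    exact hz this)
  have hlampos : 0 < lam := by
    obtain ⟨ε, hε, hball⟩ := Metric.isOpen_iff.mp hΩopen 0 h0
    set μ₀ : ℝ := ‖z‖⁻¹ * (ε / 2) with hμ₀
    have hμ₀pos : 0 < μ₀ := mul_pos (inv_pos.mpr hznorm) (by linarith)
    have hμ₀S : μ₀ ∈ S := by
      refine ⟨hμ₀pos.le, hball ?_⟩
      rw [mem_ball, dist_zero_right, norm_smul, Real.norm_eq_abs,
        abs_of_pos hμ₀pos, hμ₀, mul_comm, ← mul_assoc, mul_inv_cancel₀ hznorm.ne', one_mul]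
      linarith
    exact lt_of_lt_of_le hμ₀pos (le_csSup hSbdd hμ₀S)
  have factA : ∀ μ : ℝ, 0 ≤ μ → μ < lam → μ • z ∈ Ω := by
    intro μ hμ0 hμ
    obtain ⟨μ', hμ'S, hμμ'⟩ := exists_lt_of_lt_csSup hSne hμ
    have hμ'pos : 0 < μ' := lt_of_le_of_lt hμ0 hμμ'
    have h1 : (μ / μ') • (μ' • z) ∈ Ω :=
      hstar _ hμ'S.2 _ ⟨div_nonneg hμ0 hμ'pos.le, (div_le_one hμ'pos).mpr hμμ'.le⟩
    rwa [smul_smul, div_mul_cancel₀ _ hμ'pos.ne'] at h1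
  have hnotmem : lam • z ∉ Ω := by
    intro hmem
    obtain ⟨ε, hε, hball⟩ := Metric.isOpen_iff.mp hΩopen _ hmem
    set δ : ℝ := ‖z‖⁻¹ * (ε / 2) with hδ
    have hδpos : 0 < δ := mul_pos (inv_pos.mpr hznorm) (by linarith)
    have hmem' : (lam + δ) ∈ S := by
      refine ⟨by linarith, hball ?_⟩
      rw [mem_ball, dist_eq_norm, ← sub_smul, add_sub_cancel_left, norm_smul,
        Real.norm_eq_abs, abs_of_pos hδpos, hδ, mul_comm, ← mul_assoc, mul_inv_cancel₀ hznorm.ne', one_mul]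
      linarith
    have := le_csSup hSbdd hmem'
    linarith
  have hcl : lam • z ∈ closure Ω := by
    have hlamcl : lam ∈ closure S := csSup_mem_closure hSne hSbdd
    have hcont : Continuous fun μ : ℝ => μ • z := continuous_id.smul continuous_const
    exact map_mem_closure (f := fun μ : ℝ => μ • z) hcont hlamcl (fun μ (hμ : μ ∈ S) => hμ.2)
  have hfr : lam • z ∈ frontier Ω := by
    rw [frontier, hΩopen.interior_eq]
    exact ⟨hcl, hnotmem⟩
  have hb' : b = 1 - a := by linarith
  have ha1 : a < 1 := by linarith
  have key : a • (lam • x) + (1 - a) • (lam • y) = lam • z := by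
    rw [hzdef, hb']
    module
  refine ⟨lam • x, hstar _ hx _ ⟨hlampos.le, hlam1⟩,
    lam • y, hstar _ hy _ ⟨hlampos.le, hlam1⟩, a, ⟨ha, ha1⟩, ?_, ?_, ?_⟩
  · rw [key]; exact hfr
  · intro μ hμ0 hμ1
    rw [key, smul_smul]
    exact factA _ (mul_nonneg hμ0 hlampos.le) (by nlinarith)
  · rintro ⟨ε, hε, hall⟩
    set t : ℝ := max (1 - ε / 2) (1 / 2) with ht
    have ht0 : 0 ≤ t := le_trans (by norm_num) (le_max_right _ _)
    have ht1 : t < 1 := max_lt (by linarith) (by norm_num)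
    have htmem : t ∈ Ioo (1 - ε) (1 + ε) :=
      ⟨lt_of_lt_of_le (by linarith) (le_max_left _ _), by linarith⟩
    have hfr' := hall t htmem
    rw [key] at hfr'
    have hΩmem : t • lam • z ∈ Ω := by
      rw [smul_smul]
      exact factA _ (mul_nonneg ht0 hlampos.le) (by nlinarith)
    rw [frontier, hΩopen.interior_eq] at hfr'
    exact hfr'.2 hΩmem
end
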